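/- arXiv:0704.2800 — 2 statements merged into one kernel-verified Lean document; each statement's English description precedes it below -/
import Mathlib

section
/- The topology on H generated by ℬ is second countable. -/
/-!
Fix a compact exhaustion `K₀ ⊆ K₁ ⊆ ⋯` of `G` and countable bases of `G` and `X`. The sets
`inl '' V` (`V` basic in `G`) and `r̃⁻¹(W) \ Kₙ` (`W` basic in `X`) form a countable subfamily
of `ℬ` generating the same topology. Given `r̃⁻¹(W) \ C` with `C ⊆ Kₙ`, split it as
`inl '' (r⁻¹(W) \ C) ∪ (r̃⁻¹(W) \ Kₙ)`: the first piece is an open subset of `G` (`r` is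
continuous and `C` is closed), and the second is a union of sets `r̃⁻¹(W') \ Kₙ` with `W'` basic.
-/

open TopologicalSpace Set Topology

/-- The collection `ℬ` of subsets of `H = G ⊔ X`: all open subsets of `G`, together with
all sets of the form `r̃⁻¹(W) \ C` where `W ⊆ X` is open and `C ⊆ G` is compact.
Here `r̃ = Sum.elim r id : G ⊕ X → X` extends `r` by `r̃(∞^u) = u`. -/
def basisSets (G X : Type*) [TopologicalSpace G] [TopologicalSpace X] (r : G → X) :
    Set (Set (G ⊕ X)) :=
  {s | ∃ U : Set G, IsOpen U ∧ s = Sum.inl '' U} ∪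
  {s | ∃ (W : Set X) (C : Set G), IsOpen W ∧ IsCompact C ∧
      s = Sum.elim r id ⁻¹' W \ Sum.inl '' C}

theorem secondCountableTopology_generateFrom_of_countable_subset {α : Type*}
    {s b : Set (Set α)} (hb : b.Countable) (hbs : b ⊆ s)
    (hopen : ∀ t ∈ s, IsOpen[generateFrom b] t) :
    @SecondCountableTopology α (generateFrom s) :=
  @SecondCountableTopology.mk _ (generateFrom s)
    ⟨b, hb, le_antisymm (generateFrom_anti hbs) (le_generateFrom hopen)⟩

theorem Sum.elim_preimage_sdiff_inl_image_eq_union {G X : Type*} (r : G → X) {W : Set X}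
    {C K : Set G} (hCK : C ⊆ K) :
    Sum.elim r id ⁻¹' W \ Sum.inl '' C =
      Sum.inl '' (r ⁻¹' W \ C) ∪ (Sum.elim r id ⁻¹' W \ Sum.inl '' K) := by
  ext (g | u)
  · simp only [mem_sdiff, mem_preimage, Sum.elim_inl, mem_union, Sum.inl_injective.mem_set_image]
    exact ⟨fun ⟨hW, hC⟩ => Or.inl ⟨hW, hC⟩,
      fun h => h.elim id fun ⟨hW, hK⟩ => ⟨hW, fun hC => hK (hCK hC)⟩⟩
  · simp

namespace basisSets

variable {G X : Type*} [TopologicalSpace G] [TopologicalSpace X]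
  [SecondCountableTopology G] [SecondCountableTopology X] (r : G → X) (K : CompactExhaustion G)

def countableSubfamily : Set (Set (G ⊕ X)) :=
  (Sum.inl '' ·) '' countableBasis G ∪
    ⋃ n, (fun W => Sum.elim r id ⁻¹' W \ Sum.inl '' K n) '' countableBasis X

theorem countable_countableSubfamily : (countableSubfamily r K).Countable :=
  ((countable_countableBasis G).image _).union
    (countable_iUnion fun _ => (countable_countableBasis X).image _)

theorem countableSubfamily_subset : countableSubfamily r K ⊆ basisSets G X r := by
  rintro s (⟨U, hU, rfl⟩ | hs)
  · exact Or.inl ⟨U, (isBasis_countableBasis G).isOpen hU, rfl⟩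
  · obtain ⟨n, W, hW, rfl⟩ := mem_iUnion.1 hs
    exact Or.inr ⟨W, K n, (isBasis_countableBasis X).isOpen hW, K.isCompact n, rfl⟩

theorem isOpen_inl_image {U : Set G} (hU : IsOpen U) :
    IsOpen[generateFrom (countableSubfamily r K)] (Sum.inl '' U) := by
  rw [(isBasis_countableBasis G).open_eq_sUnion' hU, sUnion_eq_biUnion, image_iUnion₂]
  exact @isOpen_biUnion _ _ (generateFrom _) _ _ fun V hV =>
    isOpen_generateFrom_of_mem (Or.inl ⟨V, hV.1, rfl⟩)

theorem isOpen_preimage_sdiff_inl_image {W : Set X} (hW : IsOpen W) (n : ℕ) :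
    IsOpen[generateFrom (countableSubfamily r K)] (Sum.elim r id ⁻¹' W \ Sum.inl '' K n) := by
  rw [(isBasis_countableBasis X).open_eq_sUnion' hW, preimage_sUnion]
  simp only [iUnion_sdiff]
  exact @isOpen_biUnion _ _ (generateFrom _) _ _ fun W' hW' =>
    isOpen_generateFrom_of_mem (Or.inr (mem_iUnion.2 ⟨n, W', hW'.1, rfl⟩))

theorem isOpen_generateFrom_countableSubfamily [T2Space G] (hc : Continuous r) :
    ∀ s ∈ basisSets G X r, IsOpen[generateFrom (countableSubfamily r K)] s := by
  rintro s (⟨U, hU, rfl⟩ | ⟨W, C, hW, hC, rfl⟩)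
  · exact isOpen_inl_image r K hU
  · obtain ⟨n, hCK⟩ := K.exists_superset_of_isCompact hC
    rw [Sum.elim_preimage_sdiff_inl_image_eq_union r hCK]
    exact @IsOpen.union _ _ _ (generateFrom _)
      (isOpen_inl_image r K ((hW.preimage hc).sdiff hC.isClosed))
      (isOpen_preimage_sdiff_inl_image r K hW n)

end basisSets

theorem stmt4_general {G X : Type*} [TopologicalSpace G] [TopologicalSpace X]
    [LocallyCompactSpace G] [SecondCountableTopology G] [T2Space G]
    [SecondCountableTopology X]
    (r : G → X) (hc : Continuous r) :
    @SecondCountableTopology (G ⊕ X) (TopologicalSpace.generateFrom (basisSets G X r)) := by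
  let K := CompactExhaustion.choice G
  exact secondCountableTopology_generateFrom_of_countable_subset
    (basisSets.countable_countableSubfamily r K) (basisSets.countableSubfamily_subset r K)
    (basisSets.isOpen_generateFrom_countableSubfamily r K hc)

/-- the topology on `H` generated by `ℬ` is second countable. -/
theorem stmt4 {G X : Type*} [TopologicalSpace G] [TopologicalSpace X]
    [LocallyCompactSpace G] [SecondCountableTopology G] [T2Space G]
    [LocallyCompactSpace X] [SecondCountableTopology X] [T2Space X]
    (r : G → X) (hc : Continuous r) (ho : IsOpenMap r) (hs : Function.Surjective r) :
    @SecondCountableTopology (G ⊕ X) (TopologicalSpace.generateFrom (basisSets G X r)) :=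
  stmt4_general r hc
end

section
/- The extended map r̃ : H → X is continuous and open. -/
open TopologicalSpace Set

/-! `ℬ` is closed under binary intersections (compact sets being closed in the Hausdorff
space `G`), hence a basis of the topology it generates. Continuity of `r̃` is immediate since
`r̃⁻¹(W) = r̃⁻¹(W) \ ∅ ∈ ℬ`, and openness can be checked on `ℬ`: `r̃(U) = r(U)`, and
`r̃(r̃⁻¹(W) \ C) = W` because every `∞^u` with `u ∈ W` survives the removal of `C`. -/

section

variable {G X : Type*} {r : G → X}

lemma inl_image_inter_sumElim_preimage_diff (U : Set G) (W : Set X) (C : Set G) :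
    Sum.inl '' U ∩ (Sum.elim r id ⁻¹' W \ Sum.inl '' C) = Sum.inl '' ((U ∩ r ⁻¹' W) \ C) := by
  ext (g | x) <;> simp [and_assoc]

lemma sumElim_preimage_diff_inter (W₁ W₂ : Set X) (C₁ C₂ : Set G) :
    (Sum.elim r id ⁻¹' W₁ \ Sum.inl '' C₁) ∩ (Sum.elim r id ⁻¹' W₂ \ Sum.inl '' C₂) =
      Sum.elim r id ⁻¹' (W₁ ∩ W₂) \ Sum.inl '' (C₁ ∪ C₂) := by
  ext (g | x) <;> simp
  tauto

lemma sumElim_image_preimage_diff (W : Set X) (C : Set G) :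
    Sum.elim r id '' (Sum.elim r id ⁻¹' W \ Sum.inl '' C) = W := by
  refine subset_antisymm (image_subset_iff.2 sdiff_subset) fun x hx => ?_
  exact ⟨Sum.inr x, ⟨hx, by simp⟩, rfl⟩

end

namespace basisSets

variable {G X : Type*} [TopologicalSpace G] [TopologicalSpace X] {r : G → X}

lemma inter_mem [T2Space G] (hc : Continuous r) {t₁ t₂ : Set (G ⊕ X)}
    (h₁ : t₁ ∈ basisSets G X r) (h₂ : t₂ ∈ basisSets G X r) : t₁ ∩ t₂ ∈ basisSets G X r := by
  have hopen {U : Set G} {W : Set X} {C : Set G} (hU : IsOpen U) (hW : IsOpen W)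
      (hC : IsCompact C) : IsOpen ((U ∩ r ⁻¹' W) \ C) :=
    (hU.inter (hW.preimage hc)).sdiff hC.isClosed
  rcases h₁ with ⟨U₁, hU₁, rfl⟩ | ⟨W₁, C₁, hW₁, hC₁, rfl⟩ <;>
    rcases h₂ with ⟨U₂, hU₂, rfl⟩ | ⟨W₂, C₂, hW₂, hC₂, rfl⟩
  · exact Or.inl ⟨U₁ ∩ U₂, hU₁.inter hU₂, (image_inter Sum.inl_injective).symm⟩
  · exact Or.inl ⟨_, hopen hU₁ hW₂ hC₂, inl_image_inter_sumElim_preimage_diff U₁ W₂ C₂⟩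
  · exact Or.inl ⟨_, hopen hU₂ hW₁ hC₁, (inter_comm _ _).trans
      (inl_image_inter_sumElim_preimage_diff U₂ W₁ C₁)⟩
  · exact Or.inr ⟨W₁ ∩ W₂, C₁ ∪ C₂, hW₁.inter hW₂, hC₁.union hC₂,
      sumElim_preimage_diff_inter W₁ W₂ C₁ C₂⟩

lemma preimage_mem {W : Set X} (hW : IsOpen W) : Sum.elim r id ⁻¹' W ∈ basisSets G X r :=
  Or.inr ⟨W, ∅, hW, isCompact_empty, by simp⟩

lemma isTopologicalBasis [T2Space G] (hc : Continuous r) :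
    @IsTopologicalBasis (G ⊕ X) (generateFrom (basisSets G X r)) (basisSets G X r) := by
  let : TopologicalSpace (G ⊕ X) := generateFrom (basisSets G X r)
  exact ⟨fun _ h₁ _ h₂ _ hz => ⟨_, inter_mem hc h₁ h₂, hz, subset_rfl⟩,
    sUnion_eq_univ_iff.2 fun _ => ⟨_, preimage_mem isOpen_univ, trivial⟩, rfl⟩

lemma continuous_sumElim :
    @Continuous (G ⊕ X) X (generateFrom (basisSets G X r)) _ (Sum.elim r id) :=
  @continuous_def _ _ (generateFrom _) _ _ |>.2 fun _ hW =>
    GenerateOpen.basic _ (preimage_mem hW)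

lemma isOpenMap_sumElim [T2Space G] (hc : Continuous r) (ho : IsOpenMap r) :
    @IsOpenMap (G ⊕ X) X (generateFrom (basisSets G X r)) _ (Sum.elim r id) := by
  let : TopologicalSpace (G ⊕ X) := generateFrom (basisSets G X r)
  rw [(isTopologicalBasis hc).isOpenMap_iff]
  rintro _ (⟨U, hU, rfl⟩ | ⟨W, C, hW, -, rfl⟩)
  · rw [image_image]
    exact ho U hU
  · rwa [sumElim_image_preimage_diff]

end basisSets

theorem stmt6_general {G X : Type*} [TopologicalSpace G] [TopologicalSpace X] [T2Space G]
    (r : G → X) (hc : Continuous r) (ho : IsOpenMap r) :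
    @Continuous (G ⊕ X) X (TopologicalSpace.generateFrom (basisSets G X r)) _
      (Sum.elim r id) ∧
    @IsOpenMap (G ⊕ X) X (TopologicalSpace.generateFrom (basisSets G X r)) _
      (Sum.elim r id) :=
  ⟨basisSets.continuous_sumElim, basisSets.isOpenMap_sumElim hc ho⟩

/-- the extended map `r̃ : H → X` is continuous and open. -/
theorem stmt6 {G X : Type*} [TopologicalSpace G] [TopologicalSpace X]
    [LocallyCompactSpace G] [SecondCountableTopology G] [T2Space G]
    [LocallyCompactSpace X] [SecondCountableTopology X] [T2Space X]
    (r : G → X) (hc : Continuous r) (ho : IsOpenMap r) (hs : Function.Surjective r) :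
    @Continuous (G ⊕ X) X (TopologicalSpace.generateFrom (basisSets G X r)) _
      (Sum.elim r id) ∧
    @IsOpenMap (G ⊕ X) X (TopologicalSpace.generateFrom (basisSets G X r)) _
      (Sum.elim r id) :=
  stmt6_general r hc ho
end
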